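/- Suppose F: ℂ → ℂ is holomorphic, not identically zero, with F(z+1) = F(z) and F(z+τ) = e^{-iπKτ}e^{-2πiKz}F(z) for Im τ > 0 and a positive integer K. Then the space of such functions F has complex dimension exactly K. -/

import Mathlib

/-!
Write `a_n(F) = ∫₀¹ e^{-2πinx} F(x) dx` for the Fourier coefficients of `F` on the real line.
For `F` in the space, shifting the segment `[0, 1]` to `[τ, τ + 1]` (Cauchy's theorem and
1-periodicity) turns the second functional equation into `a_n = e^{-2πinτ - πiKτ} a_{n+K}`.
Hence all `a_n` vanish as soon as `a_0, …, a_{K-1}` do, and then `F` vanishes on `ℝ` by Fourier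
uniqueness and everywhere by the identity theorem. Conversely the functions
`e^{2πirz} θ(Kz + rτ, Kτ)`, `0 ≤ r < K`, lie in the space and have `a_m = δ_{mr}` for
`0 ≤ m < K`, so `F ↦ (a_0, …, a_{K-1})` is an isomorphism onto `ℂ^K`.
-/

noncomputable section

open scoped Real

/-- The space of entire functions `F` with `F(z+1) = F(z)` and
`F(z+τ) = e^{-iπKτ} e^{-2πiKz} F(z)` (level-`K` theta functions). -/
def thetaSpace (K : ℕ) (τ : ℂ) : Submodule ℂ (ℂ → ℂ) where
  carrier := {F | Differentiable ℂ F ∧ (∀ z, F (z + 1) = F z) ∧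
    ∀ z, F (z + τ) = Complex.exp (-(π * Complex.I * K * τ)) *
      (Complex.exp (-(2 * π * Complex.I * K * z)) * F z)}
  add_mem' := by
    rintro a b ⟨ha1, ha2, ha3⟩ ⟨hb1, hb2, hb3⟩
    refine ⟨ha1.add hb1, fun z => ?_, fun z => ?_⟩
    · simp [Pi.add_apply, ha2 z, hb2 z]
    · simp only [Pi.add_apply, ha3 z, hb3 z]; ring
  zero_mem' := ⟨differentiable_const 0, fun z => rfl, fun z => by simp⟩
  smul_mem' := by
    rintro c a ⟨ha1, ha2, ha3⟩
    refine ⟨ha1.const_smul c, fun z => ?_, fun z => ?_⟩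
    · simp [Pi.smul_apply, ha2 z]
    · simp only [Pi.smul_apply, smul_eq_mul, ha3 z]; ring

open Complex MeasureTheory Filter Topology

theorem Function.Periodic.intervalIntegral_comp_add_eq {G : ℂ → ℂ}
    (hG : Differentiable ℂ G) (hper : Function.Periodic G 1) (w : ℂ) :
    ∫ x in (0:ℝ)..1, G (x + w) = ∫ x in (0:ℝ)..1, G x := by
  -- Cauchy's theorem on the rectangle with corners `0` and `1 + y I`, whose vertical sides cancel.
  have vertical (y : ℝ) : ∫ x in (0:ℝ)..1, G (x + y * I) = ∫ x in (0:ℝ)..1, G x := by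
    have h := integral_boundary_rect_eq_zero_of_differentiableOn G 0 (1 + y * I)
      hG.differentiableOn
    simp only [add_re, add_im, one_re, one_im, mul_I_re, mul_I_im, ofReal_re, ofReal_im,
      zero_re, zero_im, neg_zero, add_zero, zero_add, ofReal_zero, ofReal_one, zero_mul] at h
    simp only [add_comm (1:ℂ), hper _] at h
    linear_combination -h
  have hper' : Function.Periodic (fun u : ℝ => G (u + w.im * I)) 1 := fun u => by
    simpa [add_right_comm] using hper (u + w.im * I)
  calc ∫ x in (0:ℝ)..1, G (x + w)
      = ∫ x in (0:ℝ)..1, G (↑(x + w.re) + w.im * I) := by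
        simp only [ofReal_add, add_assoc, re_add_im]
    _ = ∫ x in (0:ℝ)..1, G (x + w.im * I) := by
        rw [intervalIntegral.integral_comp_add_right (fun u : ℝ => G (u + w.im * I)),
          zero_add, add_comm (1:ℝ), hper'.intervalIntegral_add_eq w.re 0, zero_add]
    _ = ∫ x in (0:ℝ)..1, G x := vertical w.im

theorem Differentiable.eq_zero_of_forall_ofReal {F : ℂ → ℂ} (hF : Differentiable ℂ F)
    (h : ∀ x : ℝ, F x = 0) : F = 0 := by
  have hfreq : ∃ᶠ z in 𝓝[≠] (0:ℂ), F z = 0 := by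
    have : Tendsto ((↑) : ℝ → ℂ) (𝓝[≠] 0) (𝓝[≠] 0) :=
      tendsto_nhdsWithin_of_tendsto_nhds_of_eventually_within _
        (continuous_ofReal.tendsto' 0 0 ofReal_zero |>.mono_left nhdsWithin_le_nhds)
        (eventually_nhdsWithin_of_forall fun x hx => ofReal_ne_zero.mpr hx)
    exact this.frequently (Frequently.of_forall h)
  funext z
  exact (hF.differentiableOn.analyticOnNhd isOpen_univ)
    |>.eqOn_zero_of_preconnected_of_frequently_eq_zero isPreconnected_univ (Set.mem_univ 0) hfreq
      (Set.mem_univ z)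

def fourierCoeffUnit (f : ℝ → ℂ) (n : ℤ) : ℂ :=
  ∫ x in (0:ℝ)..1, cexp (-(2 * π * I * n * x)) * f x

theorem fourierCoeff_periodic_lift {f : ℝ → ℂ} (hp : Function.Periodic f 1) (n : ℤ) :
    fourierCoeff (T := 1) hp.lift n = fourierCoeffUnit f n := by
  rw [fourierCoeff_eq_intervalIntegral _ n 0, div_one, one_smul, zero_add, fourierCoeffUnit]
  refine intervalIntegral.integral_congr fun x _ => ?_
  rw [smul_eq_mul, fourier_coe_apply, hp.lift_coe]
  push_cast
  ring_nf

theorem ContinuousMap.eq_zero_of_fourierCoeff_eq_zero {T : ℝ} [Fact (0 < T)]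
    (g : C(AddCircle T, ℂ)) (hg : fourierCoeff g = 0) : g = 0 := by
  ext x
  have hsum := has_pointwise_sum_fourier_series_of_summable (f := g) (hg ▸ summable_zero) x
  simp only [hg, Pi.zero_apply, zero_smul] at hsum
  exact hsum.unique hasSum_zero

theorem eq_zero_of_fourierCoeffUnit_eq_zero {f : ℝ → ℂ} (hf : Continuous f)
    (hp : Function.Periodic f 1) (h : ∀ n, fourierCoeffUnit f n = 0) : f = 0 := by
  let g : C(UnitAddCircle, ℂ) := ⟨hp.lift, continuous_coinduced_dom.mpr hf⟩
  have hg : g = 0 := g.eq_zero_of_fourierCoeff_eq_zero <|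
    funext fun n => (fourierCoeff_periodic_lift hp n).trans (h n)
  funext x
  exact congr($hg (x : UnitAddCircle))

theorem fourierCoeffUnit_add {f g : ℝ → ℂ} (hf : Continuous f) (hg : Continuous g) (n : ℤ) :
    fourierCoeffUnit (f + g) n = fourierCoeffUnit f n + fourierCoeffUnit g n := by
  simp only [fourierCoeffUnit, Pi.add_apply, mul_add]
  exact intervalIntegral.integral_add (Continuous.intervalIntegrable (by fun_prop) _ _)
    (Continuous.intervalIntegrable (by fun_prop) _ _)

theorem fourierCoeffUnit_smul (c : ℂ) (f : ℝ → ℂ) (n : ℤ) :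
    fourierCoeffUnit (c • f) n = c * fourierCoeffUnit f n := by
  simp only [fourierCoeffUnit, Pi.smul_apply, smul_eq_mul, mul_left_comm _ c]
  exact intervalIntegral.integral_const_mul c _

theorem integral_exp_two_pi_I_int_mul (k : ℤ) :
    ∫ x in (0:ℝ)..1, cexp (2 * π * I * k * x) = if k = 0 then 1 else 0 := by
  split_ifs with hk
  · simp [hk]
  · have hc : 2 * π * I * k ≠ 0 := by simp [hk, Real.pi_ne_zero]
    rw [integral_exp_mul_complex hc, ofReal_one, mul_one, ofReal_zero, mul_zero, exp_zero,
      show 2 * π * I * k = k * (2 * π * I) by ring, exp_int_mul_two_pi_mul_I, sub_self, zero_div]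

theorem fourierCoeffUnit_tsum_mul_exp {c : ℤ → ℂ} (hc : Summable c) (k : ℤ → ℤ) (m : ℤ) :
    fourierCoeffUnit (fun x => ∑' n, c n * cexp (2 * π * I * k n * x)) m
      = ∑' n, if k n = m then c n else 0 := by
  have hc' : Summable (‖c ·‖) := summable_norm_iff.mpr hc
  let e : ℤ → C(ℝ, ℂ) := fun n =>
    ⟨fun x => c n * cexp (2 * π * I * (k n - m : ℤ) * x), by fun_prop⟩
  have he_apply (n : ℤ) (x : ℝ) : ‖e n x‖ = ‖c n‖ := by
    simp [e, norm_exp]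
  let J : TopologicalSpace.Compacts ℝ := ⟨Set.uIcc 0 1, isCompact_uIcc⟩
  have he (n : ℤ) : ‖(e n).restrict J‖ = ‖c n‖ := by
    refine le_antisymm
      ((ContinuousMap.norm_le _ (norm_nonneg _)).mpr fun x => (he_apply n x).le) ?_
    have := (e n).restrict J |>.norm_coe_le_norm ⟨0, Set.left_mem_uIcc⟩
    rwa [ContinuousMap.restrict_apply, he_apply] at this
  calc fourierCoeffUnit (fun x => ∑' n, c n * cexp (2 * π * I * k n * x)) m
      = ∫ x in (0:ℝ)..1, ∑' n, e n x := by
        refine intervalIntegral.integral_congr fun x _ => ?_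
        rw [← tsum_mul_left]
        refine tsum_congr fun n => ?_
        simp only [e, ContinuousMap.coe_mk, mul_left_comm _ (c n), ← exp_add]
        push_cast
        ring_nf
    _ = ∑' n, ∫ x in (0:ℝ)..1, e n x :=
        (intervalIntegral.tsum_intervalIntegral_eq_of_summable_norm
          (hc'.congr fun n => (he n).symm)).symm
    _ = ∑' n, if k n = m then c n else 0 := by
        refine tsum_congr fun n => ?_
        simp only [e, ContinuousMap.coe_mk, intervalIntegral.integral_const_mul,
          integral_exp_two_pi_I_int_mul, sub_eq_zero]
        split_ifs <;> simp

theorem Function.Periodic.forall_int_of_forall_lt {p : ℤ → Prop} {K : ℕ}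
    (hp : Function.Periodic p K) (hK : 0 < K) (h : ∀ r < K, p r) (m : ℤ) : p m := by
  rw [← hp.sub_int_mul_eq (m / K), Int.cast_id, mul_comm, ← Int.emod_def]
  have h0 : 0 ≤ m % K := Int.emod_nonneg m (by omega)
  have hlt : m % K < K := Int.emod_lt_of_pos m (by omega)
  simpa [Int.toNat_of_nonneg h0] using h (m % K).toNat (by omega)

section ThetaSpace

variable {K : ℕ} {τ : ℂ}

theorem fourierCoeffUnit_eq_exp_mul_of_mem_thetaSpace {F : ℂ → ℂ} (hF : F ∈ thetaSpace K τ)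
    (n : ℤ) : fourierCoeffUnit (fun x : ℝ => F x) n = cexp (-(2 * π * I * n * τ) - π * I * K * τ)
      * fourierCoeffUnit (fun x : ℝ => F x) (n + K) := by
  obtain ⟨hd, hper, hquasi⟩ := hF
  let G : ℂ → ℂ := fun z => cexp (-(2 * π * I * n * z)) * F z
  have hGd : Differentiable ℂ G := by fun_prop
  have hGper : Function.Periodic G 1 := fun z => by
    simp only [G, hper z]
    rw [show -(2 * π * I * n * (z + 1)) = -(2 * π * I * n * z) + (-n : ℤ) * (2 * π * I) by
      push_cast; ring, exp_add, exp_int_mul_two_pi_mul_I, mul_one]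
  calc fourierCoeffUnit (fun x : ℝ => F x) n
      = ∫ x in (0:ℝ)..1, G (x + τ) := (hGper.intervalIntegral_comp_add_eq hGd τ).symm
    _ = ∫ x in (0:ℝ)..1, cexp (-(2 * π * I * n * τ) - π * I * K * τ)
          * (cexp (-(2 * π * I * (n + K : ℤ) * x)) * F x) := by
        refine intervalIntegral.integral_congr fun x _ => ?_
        simp only [G, hquasi, ← mul_assoc, ← exp_add]
        congr 2
        push_cast
        ring
    _ = _ := intervalIntegral.integral_const_mul _ _

theorem eq_zero_of_mem_thetaSpace (hK : 0 < K) {F : ℂ → ℂ} (hF : F ∈ thetaSpace K τ)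
    (h : ∀ r < K, fourierCoeffUnit (fun x : ℝ => F x) r = 0) : F = 0 := by
  have hzero : Function.Periodic (fun n : ℤ => fourierCoeffUnit (fun x : ℝ => F x) n = 0) K :=
    fun n => by simp [fourierCoeffUnit_eq_exp_mul_of_mem_thetaSpace hF n, exp_ne_zero]
  refine hF.1.eq_zero_of_forall_ofReal <| congrFun <| eq_zero_of_fourierCoeffUnit_eq_zero
    (hF.1.continuous.comp continuous_ofReal) (fun x => by simpa using hF.2.1 x)
    (hzero.forall_int_of_forall_lt hK h)

theorem im_natCast_mul_pos (hK : 0 < K) (hτ : 0 < τ.im) : 0 < ((K : ℂ) * τ).im := by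
  simpa using mul_pos (Nat.cast_pos.mpr hK) hτ

def thetaBasis (K : ℕ) (τ : ℂ) (r : ℕ) (z : ℂ) : ℂ :=
  cexp (2 * π * I * r * z) * jacobiTheta₂ (K * z + r * τ) (K * τ)

theorem thetaBasis_mem (hK : 0 < K) (hτ : 0 < τ.im) (r : ℕ) :
    thetaBasis K τ r ∈ thetaSpace K τ := by
  have hKτ := im_natCast_mul_pos hK hτ
  refine ⟨fun z => ?_, fun z => ?_, fun z => ?_⟩
  · exact (differentiable_exp.comp (by fun_prop) z).mul
      ((differentiableAt_jacobiTheta₂_fst _ hKτ).comp z (by fun_prop))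
  · have h1 : Function.Periodic (jacobiTheta₂ · (K * τ)) 1 := (jacobiTheta₂_add_left · _)
    have hθ (w : ℂ) : jacobiTheta₂ (w + K) (K * τ) = jacobiTheta₂ w (K * τ) := by
      simpa using h1.nat_mul K w
    rw [thetaBasis, thetaBasis, show K * (z + 1) + r * τ = (K * z + r * τ) + K by ring, hθ,
      show 2 * π * I * r * (z + 1) = 2 * π * I * r * z + r * (2 * π * I) by ring, exp_add,
      exp_nat_mul_two_pi_mul_I, mul_one]
  · rw [thetaBasis, thetaBasis, show K * (z + τ) + r * τ = (K * z + r * τ) + K * τ by ring,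
      jacobiTheta₂_add_left']
    simp only [← mul_assoc, ← exp_add]
    congr 2
    ring

theorem fourierCoeffUnit_thetaBasis (hK : 0 < K) (hτ : 0 < τ.im) (r : ℕ) (m : ℤ) :
    fourierCoeffUnit (fun x : ℝ => thetaBasis K τ r x) m
      = ∑' n : ℤ, if n * K + r = m then jacobiTheta₂_term n (r * τ) (K * τ) else 0 := by
  rw [← fourierCoeffUnit_tsum_mul_exp
    ((summable_jacobiTheta₂_term_iff _ _).mpr (im_natCast_mul_pos hK hτ))]
  congr 1
  funext x
  rw [thetaBasis, jacobiTheta₂, ← tsum_mul_left]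
  refine tsum_congr fun n => ?_
  simp only [jacobiTheta₂_term, ← exp_add]
  push_cast
  ring_nf

theorem fourierCoeffUnit_thetaBasis_of_lt (hK : 0 < K) (hτ : 0 < τ.im) {r m : ℕ}
    (hr : r < K) (hm : m < K) :
    fourierCoeffUnit (fun x : ℝ => thetaBasis K τ r x) m = if m = r then 1 else 0 := by
  rw [fourierCoeffUnit_thetaBasis hK hτ, tsum_eq_single 0]
  · simp [jacobiTheta₂_term, eq_comm]
  · intro n hn
    rw [if_neg]
    intro h
    -- `|m - r| < K` leaves no room for `n * K = m - r` with `n ≠ 0`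
    rcases lt_or_gt_of_ne hn with hn | hn <;> nlinarith

variable (K τ) in
def thetaCoeffs : thetaSpace K τ →ₗ[ℂ] (Fin K → ℂ) where
  toFun F r := fourierCoeffUnit (fun x : ℝ => F.1 x) (r : ℕ)
  map_add' F G := funext fun _ =>
    fourierCoeffUnit_add (F.2.1.continuous.comp continuous_ofReal)
      (G.2.1.continuous.comp continuous_ofReal) _
  map_smul' c _ := funext fun _ => fourierCoeffUnit_smul c _ _

theorem thetaCoeffs_injective (hK : 0 < K) : Function.Injective (thetaCoeffs K τ) :=
  injective_iff_map_eq_zero _ |>.mpr fun F hF =>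
    Subtype.ext <| eq_zero_of_mem_thetaSpace hK F.2 fun r hr => congrFun hF ⟨r, hr⟩

theorem thetaCoeffs_surjective (hK : 0 < K) (hτ : 0 < τ.im) :
    Function.Surjective (thetaCoeffs K τ) := by
  rw [← LinearMap.range_eq_top, eq_top_iff, ← (Pi.basisFun ℂ (Fin K)).span_eq, Submodule.span_le]
  rintro _ ⟨r, rfl⟩
  refine ⟨⟨thetaBasis K τ r, thetaBasis_mem hK hτ r⟩, funext fun m => ?_⟩
  simp [thetaCoeffs, fourierCoeffUnit_thetaBasis_of_lt hK hτ r.2 m.2, Pi.single_apply, Fin.ext_iff]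

end ThetaSpace

/-- The space of level-`K` theta functions has complex dimension exactly `K`. -/
theorem thetaSpace_finrank (K : ℕ) (hK : 0 < K) (τ : ℂ) (hτ : 0 < τ.im) :
    Module.finrank ℂ (thetaSpace K τ) = K :=
  (LinearEquiv.ofBijective (thetaCoeffs K τ)
    ⟨thetaCoeffs_injective hK, thetaCoeffs_surjective hK hτ⟩).finrank_eq.trans
    (Module.finrank_fin_fun ℂ)
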